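/- Let n ≥ 2, k ≥ 0, and i ≥ 0 be integers, and let d = C(n+k, n) be the degree of regularity of the Kneser graph G = KG(2n+k, n). If C(2n+k, n) ≤ 2d + 2 − 2i (i.e., |V(G)| ≤ 2d + 2 − 2i), then the b-chromatic number satisfies φ(G) ≤ d − i. -/

import Mathlib

/-- The Kneser graph `KG(n, m)`: vertices are the `m`-element subsets of an
`n`-element set, adjacent iff disjoint. -/
def kneserGraph (n m : ℕ) : SimpleGraph {A : Finset (Fin n) // A.card = m} where
  Adj A B := A ≠ B ∧ Disjoint (A : Finset (Fin n)) (B : Finset (Fin n))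
  symm := ⟨fun _ _ h => ⟨h.1.symm, h.2.symm⟩⟩
  loopless := ⟨fun _ h => h.1 rfl⟩

/-- `f` is a proper coloring of `G`. -/
def IsProperColoring {V α : Type*} (G : SimpleGraph V) (f : V → α) : Prop :=
  ∀ v w : V, G.Adj v w → f v ≠ f w

/-- `v` is color-dominating w.r.t. the coloring `f`: every used color appears
in the closed neighborhood of `v`. -/
def IsColorDominating {V α : Type*} (G : SimpleGraph V) (f : V → α) (v : V) : Prop :=
  ∀ c ∈ Set.range f, f v = c ∨ ∃ w : V, G.Adj v w ∧ f w = c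

/-- `f` is a b-coloring of `G`: a proper coloring each of whose color classes
contains a color-dominating vertex. -/
def IsBColoring {V α : Type*} (G : SimpleGraph V) (f : V → α) : Prop :=
  IsProperColoring G f ∧
    ∀ c ∈ Set.range f, ∃ v : V, f v = c ∧ IsColorDominating G f v

/-- The b-chromatic number of `G`: the largest `k` such that `G` admits a
b-coloring with exactly `k` colors. -/
noncomputable def bChromaticNumber {V : Type*} (G : SimpleGraph V) : ℕ :=
  sSup {k : ℕ | ∃ f : V → Fin k, Function.Surjective f ∧ IsBColoring G f}

/-!
In a b-coloring of `KG(M, n)` with `m` colors, let the core of a color class be the intersection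
of its members. A color class is an intersecting family of `n`-sets, so with `n ≥ 2` its size
plus the size of its core is at least `3`. Cores of distinct classes are disjoint: a
color-dominating vertex of one class is disjoint from some member of the other. Summing,
`3m ≤ C(M, n) + M`. For `M = 2n + k`, the hypothesis `C(M, n) ≤ 2d + 2 - 2i` excludes
`KG(4, 2)`, `KG(5, 2)` and `KG(6, 2)`, and otherwise `C(M, n) ≥ C(M, 2) ≥ 2M + 6`; together
these give `6m ≤ 3 C(M, n) - 6 ≤ 6(d - i)`.
-/

open Finset

theorem Set.Intersecting.three_le_card_add_card_inf {β : Type*} [Fintype β] [DecidableEq β]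
    {𝒜 : Finset (Finset β)} {n : ℕ} (h𝒜 : (𝒜 : Set (Finset β)).Intersecting)
    (hne : 𝒜.Nonempty) (hcard : ∀ s ∈ 𝒜, #s = n) (hn : 2 ≤ n) :
    3 ≤ #𝒜 + #(𝒜.inf id) := by
  obtain h₁ | h₂ | h₃ : #𝒜 = 1 ∨ #𝒜 = 2 ∨ 3 ≤ #𝒜 := by
    have := hne.card_pos; omega
  · obtain ⟨s, rfl⟩ := card_eq_one.1 h₁
    simp [hcard s (mem_singleton_self s)]
    omega
  · obtain ⟨s, t, -, rfl⟩ := card_eq_two.1 h₂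
    have hst : (s ∩ t).Nonempty :=
      Finset.not_disjoint_iff_nonempty_inter.1 (@h𝒜 s (by simp) t (by simp))
    have : 0 < #(s ⊓ t) := hst.card_pos
    simp only [inf_insert, inf_singleton, id_eq, h₂]
    omega
  · omega

theorem Fintype.card_finset_card_eq (M n : ℕ) :
    Fintype.card {A : Finset (Fin M) // #A = n} = M.choose n := by
  rw [Fintype.card_of_subtype _ fun _ => mem_powersetCard_univ, card_powersetCard, card_univ,
    Fintype.card_fin]

theorem Nat.choose_two_le_choose {M n : ℕ} (hn : 2 ≤ n) (hM : 2 * n ≤ M) :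
    M.choose 2 ≤ M.choose n := by
  induction n, hn using Nat.le_induction with
  | base => rfl
  | succ j _ ih => exact (ih (by omega)).trans (Nat.choose_le_succ_of_lt_half_left (by omega))

theorem Nat.two_mul_add_six_le_choose {M n : ℕ} (hn : 2 ≤ n) (hM : 2 * n ≤ M) (h7 : 7 ≤ M) :
    2 * M + 6 ≤ M.choose n := by
  refine le_trans ?_ (Nat.choose_two_le_choose hn hM)
  rw [Nat.choose_two_right, Nat.le_div_iff_mul_le two_pos]
  have h6 : 6 ≤ M - 1 := by omega
  nlinarith [Nat.mul_le_mul_left M h6]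

theorem Nat.two_mul_add_six_le_choose_of_choose_le {n k : ℕ} (hn : 2 ≤ n)
    (h : (2 * n + k).choose n ≤ 2 * (n + k).choose n + 2) :
    2 * (2 * n + k) + 6 ≤ (2 * n + k).choose n := by
  by_cases h7 : 7 ≤ 2 * n + k
  · exact Nat.two_mul_add_six_le_choose hn (by omega) h7
  · obtain ⟨hn3, hk2⟩ : n ≤ 3 ∧ k ≤ 2 := by omega
    interval_cases n <;> interval_cases k <;> revert h <;> decide

section KneserColoring

variable {M n : ℕ} {α : Type*} [DecidableEq α]

def colorClassFamily (f : {A : Finset (Fin M) // #A = n} → α) (c : α) :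
    Finset (Finset (Fin M)) :=
  (univ.filter fun v => f v = c).map (Function.Embedding.subtype _)

def colorCore (f : {A : Finset (Fin M) // #A = n} → α) (c : α) : Finset (Fin M) :=
  (colorClassFamily f c).inf id

variable {f : {A : Finset (Fin M) // #A = n} → α}

theorem mem_colorClassFamily {c : α} {s : Finset (Fin M)} :
    s ∈ colorClassFamily f c ↔ ∃ h : #s = n, f ⟨s, h⟩ = c := by
  simp [colorClassFamily]

theorem colorCore_subset {c : α} {v : {A : Finset (Fin M) // #A = n}} (hv : f v = c) :
    colorCore f c ⊆ v :=
  inf_le (f := id) (mem_colorClassFamily.2 ⟨v.2, hv⟩)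

theorem IsProperColoring.intersecting_colorClassFamily (hn : 0 < n)
    (hf : IsProperColoring (kneserGraph M n) f) (c : α) :
    (colorClassFamily f c : Set (Finset (Fin M))).Intersecting := by
  rintro s hsc t htc hst
  obtain ⟨hs, rfl⟩ := mem_colorClassFamily.1 hsc
  obtain ⟨ht, hc⟩ := mem_colorClassFamily.1 htc
  by_cases heq : s = t
  · subst heq
    exact (card_pos.1 (hs ▸ hn)).ne_empty (disjoint_self.1 hst)
  · exact hf _ _ ⟨fun h => heq (congrArg Subtype.val h), hst⟩ hc.symm

theorem IsBColoring.disjoint_colorCore (hf : IsBColoring (kneserGraph M n) f) {c₁ c₂ : α}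
    (hc₁ : c₁ ∈ Set.range f) (hc₂ : c₂ ∈ Set.range f) (hne : c₁ ≠ c₂) :
    Disjoint (colorCore f c₁) (colorCore f c₂) := by
  obtain ⟨v, hv, hdom⟩ := hf.2 c₂ hc₂
  rcases hdom c₁ hc₁ with hv' | ⟨w, hadj, hw⟩
  · exact absurd (hv'.symm.trans hv) hne
  · exact hadj.2.symm.mono (colorCore_subset hw) (colorCore_subset hv)

theorem IsBColoring.three_mul_card_le [Fintype α] (hn : 2 ≤ n) (hsurj : Function.Surjective f)
    (hf : IsBColoring (kneserGraph M n) f) : 3 * Fintype.card α ≤ M.choose n + M := by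
  have hclass : ∑ c, #(colorClassFamily f c) = M.choose n := by
    simp only [colorClassFamily, card_map]
    rw [← card_eq_sum_card_fiberwise fun v _ => mem_univ (f v), card_univ,
      Fintype.card_finset_card_eq]
  have hcore : ∑ c, #(colorCore f c) ≤ M := by
    rw [← card_biUnion fun c₁ _ c₂ _ hne => hf.disjoint_colorCore (hsurj c₁) (hsurj c₂) hne]
    exact (card_le_univ _).trans_eq (Fintype.card_fin M)
  have hpointwise (c : α) : 3 ≤ #(colorClassFamily f c) + #(colorCore f c) := by
    obtain ⟨v, hv⟩ := hsurj c
    exact (hf.1.intersecting_colorClassFamily (by omega) c).three_le_card_add_card_inf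
      ⟨v, mem_colorClassFamily.2 ⟨v.2, hv⟩⟩ (fun s hs => (mem_colorClassFamily.1 hs).1) hn
  have hsum : 3 * Fintype.card α ≤ ∑ c, (#(colorClassFamily f c) + #(colorCore f c)) :=
    calc 3 * Fintype.card α = ∑ _c : α, 3 := by simp [mul_comm]
      _ ≤ _ := sum_le_sum fun c _ => hpointwise c
  rw [sum_add_distrib] at hsum
  omega

end KneserColoring

theorem three_mul_bChromaticNumber_kneserGraph_le {M n : ℕ} (hn : 2 ≤ n) :
    3 * bChromaticNumber (kneserGraph M n) ≤ M.choose n + M := by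
  suffices bChromaticNumber (kneserGraph M n) ≤ (M.choose n + M) / 3 by omega
  refine csSup_le' ?_
  rintro m ⟨f, hsurj, hf⟩
  have := hf.three_mul_card_le hn hsurj
  rw [Fintype.card_fin] at this
  omega

/-- (Balakrishnan–Kavaskar) Let `n ≥ 2`, `k ≥ 0`, `i ≥ 0`, and let
`d = C(n+k, n)` be the degree of regularity of `G = KG(2n+k, n)`. If
`|V(G)| = C(2n+k, n) ≤ 2d + 2 - 2i`, then `φ(G) ≤ d - i`. -/
theorem bala_kavaskar {n k i : ℕ} (hn : 2 ≤ n)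
    (hcard : ((2 * n + k).choose n : ℤ) ≤ 2 * ((n + k).choose n : ℤ) + 2 - 2 * (i : ℤ)) :
    (bChromaticNumber (kneserGraph (2 * n + k) n) : ℤ) ≤ ((n + k).choose n : ℤ) - (i : ℤ) := by
  have hφ := three_mul_bChromaticNumber_kneserGraph_le (M := 2 * n + k) hn
  have hbig := Nat.two_mul_add_six_le_choose_of_choose_le (k := k) hn (by omega)
  omega
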